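/- arXiv:0810.5602 — 5 statements merged into one kernel-verified Lean document; each statement's English description precedes it below -/
import Mathlib

section
/- Suppose h₁, h₂ : ℝ → ℂ are bounded integrable functions with |h_i(y)| ≤ C·e^{-√2·√|y|} for all y and some constant C. Then the convolution satisfies limsup_{y→∞} (-1/√|y|)·log|h₁ * h₂(y)|² ≥ 2√2, i.e., |h₁*h₂(y)|² = O(e^{-(2√2-ε)√|y|}) for every ε > 0. -/
open MeasureTheory Real Set Filter

lemma my_sqrt_add_le {a b : ℝ} (ha : 0 ≤ a) (hb : 0 ≤ b) :
    Real.sqrt (a + b) ≤ Real.sqrt a + Real.sqrt b := by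
  have h := Real.sqrt_le_sqrt (show a + b ≤ (Real.sqrt a + Real.sqrt b) ^ 2 by
    nlinarith [Real.sq_sqrt ha, Real.sq_sqrt hb, Real.sqrt_nonneg a, Real.sqrt_nonneg b])
  rwa [Real.sqrt_sq (by positivity)] at h

lemma my_cont (c : ℝ) : Continuous (fun t : ℝ => Real.exp (-c * Real.sqrt |t|)) :=
  Real.continuous_exp.comp (continuous_const.mul (Real.continuous_sqrt.comp continuous_abs))

lemma my_int_exp (c : ℝ) (hc : 0 < c) :
    Integrable (fun t : ℝ => Real.exp (-c * Real.sqrt |t|)) := by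
  set f : ℝ → ℝ := fun t : ℝ => Real.exp (-c * Real.sqrt |t|) with hf
  have h_top : IntegrableOn f (Ioi 1) := by
    refine Integrable.mono'
      ((integrableOn_Ioi_rpow_of_lt (show (-2:ℝ) < -1 by norm_num) one_pos).const_mul (24 / c ^ 4))
      ((my_cont c).aestronglyMeasurable.restrict) ?_
    filter_upwards [ae_restrict_mem measurableSet_Ioi] with t ht
    have ht0 : (0:ℝ) < t := lt_trans one_pos ht
    have habs : |t| = t := abs_of_pos ht0
    have hsq : Real.sqrt t ^ 4 = t ^ 2 := by
      have : Real.sqrt t ^ 4 = (Real.sqrt t ^ 2) ^ 2 := by ring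
      rw [this, Real.sq_sqrt ht0.le]
    have hexp : c ^ 4 * t ^ 2 / 24 ≤ Real.exp (c * Real.sqrt t) := by
      have := Real.pow_div_factorial_le_exp _ (by positivity : (0:ℝ) ≤ c * Real.sqrt t) 4
      have h24 : ((Nat.factorial 4 : ℕ) : ℝ) = 24 := by norm_num [Nat.factorial]
      rw [h24] at this
      calc c ^ 4 * t ^ 2 / 24 = (c * Real.sqrt t) ^ 4 / 24 := by
            rw [mul_pow, hsq]
        _ ≤ Real.exp (c * Real.sqrt t) := this
    have hpos : (0:ℝ) < c ^ 4 * t ^ 2 / 24 := by positivity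
    have : f t ≤ 24 / c ^ 4 * t ^ (-2:ℝ) := by
      have h1 : f t = (Real.exp (c * Real.sqrt t))⁻¹ := by
        simp [hf, habs, ← Real.exp_neg]
      rw [h1, Real.rpow_neg ht0.le]
      have h2 : (Real.exp (c * Real.sqrt t))⁻¹ ≤ (c ^ 4 * t ^ 2 / 24)⁻¹ :=
        inv_anti₀ hpos hexp
      refine h2.trans (le_of_eq ?_)
      rw [show (2:ℝ) = ((2:ℕ):ℝ) by norm_num, Real.rpow_natCast]
      field_simp
    rw [Real.norm_eq_abs, abs_of_pos (Real.exp_pos _)]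
    exact this
  have h_bot : IntegrableOn f (Iio (-1)) := by
    have h := (MeasurePreserving.integrableOn_comp_preimage
      (Measure.measurePreserving_neg (volume : Measure ℝ))
      (Homeomorph.neg ℝ).measurableEmbedding).2 h_top
    have heq : (f ∘ (Neg.neg : ℝ → ℝ)) = f := by
      funext t; simp [hf]
    have hpre : (Neg.neg : ℝ → ℝ) ⁻¹' (Ioi 1) = Iio (-1) := by
      ext t; simp [lt_neg]
    rwa [heq, hpre] at h
  have h_mid : IntegrableOn f (Icc (-1) 1) := (my_cont c).integrableOn_Icc
  rw [← integrableOn_univ]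
  refine (h_bot.union (h_mid.union h_top)).mono_set fun t _ => ?_
  rcases lt_or_ge t (-1) with h | h
  · exact Or.inl h
  · rcases le_or_gt t 1 with h' | h'
    · exact Or.inr (Or.inl ⟨h, h'⟩)
    · exact Or.inr (Or.inr h')

theorem stmt_4 (h₁ h₂ : ℝ → ℂ) (C : ℝ)
    (hi₁ : Integrable h₁) (hi₂ : Integrable h₂)
    (hb₁ : ∀ y : ℝ, ‖h₁ y‖ ≤ C * Real.exp (-Real.sqrt 2 * Real.sqrt |y|))
    (hb₂ : ∀ y : ℝ, ‖h₂ y‖ ≤ C * Real.exp (-Real.sqrt 2 * Real.sqrt |y|)) :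
    ∀ ε > (0 : ℝ), ∃ M : ℝ, ∀ y : ℝ,
      ‖∫ t : ℝ, h₁ t * h₂ (y - t)‖ ^ 2 ≤
        M * Real.exp (-(2 * Real.sqrt 2 - ε) * Real.sqrt |y|) := by
  intro ε hε
  have hs2 : (0:ℝ) < Real.sqrt 2 := Real.sqrt_pos.2 (by norm_num)
  set θ : ℝ := min (ε / (2 * Real.sqrt 2)) 1 with hθdef
  have hθpos : 0 < θ := lt_min (by positivity) one_pos
  have hθ1 : θ ≤ 1 := min_le_right _ _
  have hθε : 2 * Real.sqrt 2 * θ ≤ ε := by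
    have h1 : θ ≤ ε / (2 * Real.sqrt 2) := min_le_left _ _
    rw [le_div_iff₀ (by positivity)] at h1
    linarith
  set c : ℝ := Real.sqrt 2 * θ with hcdef
  have hc : 0 < c := by positivity
  have hC : 0 ≤ C := by
    have := hb₁ 0
    simpa using (norm_nonneg (h₁ 0)).trans this
  set K : ℝ := ∫ t : ℝ, Real.exp (-c * Real.sqrt |t|) with hKdef
  have hK : 0 ≤ K := integral_nonneg fun t => (Real.exp_nonneg _)
  refine ⟨(C ^ 2 * K) ^ 2, fun y => ?_⟩
  set a : ℝ := Real.exp (-Real.sqrt 2 * (1 - θ) * Real.sqrt |y|) with hadef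
  have ha : 0 ≤ a := Real.exp_nonneg _
  -- pointwise bound
  have hpt : ∀ t : ℝ, ‖h₁ t * h₂ (y - t)‖ ≤
      C ^ 2 * a * Real.exp (-c * Real.sqrt |t|) := by
    intro t
    have key : Real.sqrt |y| ≤ Real.sqrt |t| + Real.sqrt |y - t| := by
      have h1 : |y| ≤ |t| + |y - t| := by
        calc |y| = |t + (y - t)| := by ring_nf
          _ ≤ |t| + |y - t| := abs_add_le _ _
      calc Real.sqrt |y| ≤ Real.sqrt (|t| + |y - t|) := Real.sqrt_le_sqrt h1
        _ ≤ Real.sqrt |t| + Real.sqrt |y - t| := my_sqrt_add_le (abs_nonneg _) (abs_nonneg _)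
    calc ‖h₁ t * h₂ (y - t)‖ = ‖h₁ t‖ * ‖h₂ (y - t)‖ := norm_mul _ _
      _ ≤ (C * Real.exp (-Real.sqrt 2 * Real.sqrt |t|)) *
          (C * Real.exp (-Real.sqrt 2 * Real.sqrt |y - t|)) :=
        mul_le_mul (hb₁ t) (hb₂ (y - t)) (norm_nonneg _) (by positivity)
      _ = C ^ 2 * Real.exp (-Real.sqrt 2 * (Real.sqrt |t| + Real.sqrt |y - t|)) := by
        rw [mul_mul_mul_comm, ← Real.exp_add, ← sq]
        congr 1
        ring
      _ ≤ C ^ 2 * (a * Real.exp (-c * Real.sqrt |t|)) := by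
        apply mul_le_mul_of_nonneg_left _ (by positivity)
        rw [hadef, hcdef, ← Real.exp_add, Real.exp_le_exp]
        nlinarith [Real.sqrt_nonneg |t|, Real.sqrt_nonneg |y - t|, Real.sqrt_nonneg |y|,
          mul_le_mul_of_nonneg_left key (mul_nonneg hs2.le (by linarith) : (0:ℝ) ≤ Real.sqrt 2 * (1 - θ)),
          mul_le_mul_of_nonneg_left (le_add_of_nonneg_right (Real.sqrt_nonneg |y - t|) :
            Real.sqrt |t| ≤ Real.sqrt |t| + Real.sqrt |y - t|)
            (by positivity : (0:ℝ) ≤ Real.sqrt 2 * θ)]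
      _ = C ^ 2 * a * Real.exp (-c * Real.sqrt |t|) := by ring
  have hg_int : Integrable (fun t : ℝ => C ^ 2 * a * Real.exp (-c * Real.sqrt |t|)) :=
    (my_int_exp c hc).const_mul _
  have hmeas : AEStronglyMeasurable (fun t : ℝ => h₁ t * h₂ (y - t)) volume := by
    apply hi₁.aestronglyMeasurable.mul
    exact hi₂.aestronglyMeasurable.comp_quasiMeasurePreserving
      (Measure.measurePreserving_sub_left volume y).quasiMeasurePreserving
  have hf_int : Integrable (fun t : ℝ => h₁ t * h₂ (y - t)) :=
    hg_int.mono' hmeas (Filter.Eventually.of_forall fun t => by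
      simpa using hpt t)
  have hB : ‖∫ t : ℝ, h₁ t * h₂ (y - t)‖ ≤ C ^ 2 * a * K := by
    calc ‖∫ t : ℝ, h₁ t * h₂ (y - t)‖ ≤ ∫ t : ℝ, ‖h₁ t * h₂ (y - t)‖ :=
          norm_integral_le_integral_norm _
      _ ≤ ∫ t : ℝ, C ^ 2 * a * Real.exp (-c * Real.sqrt |t|) :=
          integral_mono hf_int.norm hg_int hpt
      _ = C ^ 2 * a * K := by rw [hKdef, integral_const_mul]
  have hsq : ‖∫ t : ℝ, h₁ t * h₂ (y - t)‖ ^ 2 ≤ (C ^ 2 * a * K) ^ 2 :=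
    pow_le_pow_left₀ (norm_nonneg _) hB 2
  refine hsq.trans ?_
  have h1 : (C ^ 2 * a * K) ^ 2 = (C ^ 2 * K) ^ 2 * (a ^ 2) := by ring
  rw [h1]
  apply mul_le_mul_of_nonneg_left _ (by positivity)
  rw [hadef, ← Real.exp_nat_mul]
  rw [Real.exp_le_exp]
  push_cast
  nlinarith [Real.sqrt_nonneg |y|, mul_nonneg (sub_nonneg.2 hθε) (Real.sqrt_nonneg |y|)]
end

section
/- If f ∈ L²(ℝ) has support in [-1,1] and f, viewed as an element of L²(ℝ), is not continuous at 1 or -1 (i.e. does not vanish at the endpoints in the H¹ sense), then the variance V(f) = ∫ y² |F(f)(y)|² dy is infinite. -/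
/-!
If the variance is finite, then `ξ ↦ ξ² ‖𝓕 f ξ‖²` is integrable, and as
`‖𝓕 f ξ‖ ≤ ξ⁻² + ξ² ‖𝓕 f ξ‖²` (AM–GM), so is the continuous function `𝓕 f`. Fourier inversion
then exhibits a continuous representative `𝓕⁻ (𝓕 f)` of `f`; it vanishes almost everywhere outside
`[-1, 1]`, hence everywhere outside `(-1, 1)` by continuity, in particular at `±1`.
-/

open MeasureTheory Real Set Filter

/-- Fourier transform with the paper's convention
`F(f)(y) = (1/√(2π)) ∫ f(x) e^{ixy} dx`. -/
noncomputable def FT (f : ℝ → ℂ) (y : ℝ) : ℂ :=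
  ((1 / Real.sqrt (2 * Real.pi) : ℝ) : ℂ) *
    ∫ x : ℝ, f x * Complex.exp (Complex.I * x * y)

open scoped FourierTransform SchwartzMap

section FourierInversion

variable {V : Type*} [NormedAddCommGroup V] [InnerProductSpace ℝ V] [FiniteDimensional ℝ V]
  [MeasurableSpace V] [BorelSpace V] {f g : V → ℂ}

theorem MeasureTheory.Integrable.continuous_fourier (hf : Integrable f) :
    Continuous (𝓕 f) :=
  VectorFourier.fourierIntegral_continuous continuous_fourierChar (innerSL ℝ).continuous₂ hf

theorem MeasureTheory.Integrable.continuous_fourierInv (hf : Integrable f) :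
    Continuous (𝓕⁻ f) := by
  rw [fourierInv_eq_fourier_comp_neg]
  exact hf.comp_neg.continuous_fourier

theorem Real.integral_fourier_mul_eq (hf : Integrable f) (hg : Integrable g) :
    ∫ ξ, 𝓕 f ξ * g ξ = ∫ x, f x * 𝓕 g x := by
  simpa using! VectorFourier.integral_bilin_fourierIntegral_eq_flip (.mul ℂ ℂ)
    (L := innerₗ V) continuous_fourierChar continuous_inner hf hg

theorem Real.integral_fourierInv_mul_eq (hf : Integrable f) (hg : Integrable g) :
    ∫ ξ, 𝓕⁻ f ξ * g ξ = ∫ x, f x * 𝓕⁻ g x := by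
  rw [fourierInv_eq_fourier_comp_neg, integral_fourier_mul_eq hf.comp_neg hg,
    ← integral_neg_eq_self]
  simp only [neg_neg, fourierInv_eq_fourier_neg]

theorem MeasureTheory.Integrable.ae_eq_fourierInv_fourier (hf : Integrable f)
    (h𝓕f : Integrable (𝓕 f)) : f =ᵐ[volume] 𝓕⁻ (𝓕 f) := by
  refine ae_eq_of_integral_contDiff_smul_eq hf.locallyIntegrable
    h𝓕f.continuous_fourierInv.locallyIntegrable fun φ hφ hφc ↦ ?_
  -- Writing the test function as `𝓕 (𝓕⁻ ψ)` with `ψ` Schwartz, both transforms move across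
  -- the pairing by the multiplication formula.
  let ψ : 𝓢(V, ℂ) := (hφc.comp_left Complex.ofReal_zero).toSchwartzMap
    (Complex.ofRealCLM.contDiff.comp hφ)
  have hψ : 𝓕 (𝓕⁻ (ψ : V → ℂ)) = ψ := by
    rw [← SchwartzMap.fourierInv_coe, ← SchwartzMap.fourier_coe,
      FourierTransform.fourier_fourierInv_eq]
  simp_rw [Complex.real_smul]
  calc ∫ x, φ x * f x = ∫ x, f x * 𝓕 (𝓕⁻ (ψ : V → ℂ)) x := by
        rw [hψ]; simp only [mul_comm]; rfl
    _ = ∫ x, 𝓕⁻ (𝓕 f) x * ψ x := by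
        rw [← integral_fourier_mul_eq hf (SchwartzMap.fourierInv_coe ψ ▸ (𝓕⁻ ψ).integrable),
          integral_fourierInv_mul_eq h𝓕f ψ.integrable]
    _ = ∫ x, φ x * 𝓕⁻ (𝓕 f) x := by simp only [mul_comm]; rfl

end FourierInversion

theorem FT_neg_two_pi_mul (f : ℝ → ℂ) (ξ : ℝ) :
    FT f (-(2 * π) * ξ) = ((√(2 * π))⁻¹ : ℝ) * 𝓕 f ξ := by
  rw [FT, Real.fourier_real_eq_integral_exp_smul, one_div]
  congr 1
  refine integral_congr_ae (Eventually.of_forall fun x ↦ ?_)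
  simp only [smul_eq_mul, mul_comm (f x)]
  congr 2
  push_cast
  ring

theorem lintegral_sq_mul_norm_FT_sq (f : ℝ → ℂ) :
    ∫⁻ y, ENNReal.ofReal (y ^ 2 * ‖FT f y‖ ^ 2)
      = ENNReal.ofReal (2 * π) ^ 2 * ∫⁻ ξ, ENNReal.ofReal (ξ ^ 2 * ‖𝓕 f ξ‖ ^ 2) := by
  have h2π : -(2 * π) ≠ 0 := neg_ne_zero.2 (by positivity)
  have hscale (ξ : ℝ) : ENNReal.ofReal ((-(2 * π) * ξ) ^ 2 * ‖FT f (-(2 * π) * ξ)‖ ^ 2)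
      = ENNReal.ofReal (2 * π) * ENNReal.ofReal (ξ ^ 2 * ‖𝓕 f ξ‖ ^ 2) := by
    rw [← ENNReal.ofReal_mul (by positivity), FT_neg_two_pi_mul, norm_mul, Complex.norm_real,
      norm_inv, norm_of_nonneg (sqrt_nonneg _)]
    congr 1
    field_simp
    rw [sq_sqrt (by positivity)]
    ring
  conv_lhs => rw [← Real.smul_map_volume_mul_left h2π]
  rw [lintegral_smul_measure, ← MeasurableEquiv.coe_mulLeft₀ h2π, lintegral_map_equiv]
  simp only [MeasurableEquiv.coe_mulLeft₀, hscale, abs_neg, smul_eq_mul]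
  rw [lintegral_const_mul' _ _ ENNReal.ofReal_ne_top, abs_of_pos (by positivity), sq, mul_assoc]

theorem Continuous.integrable_of_lintegral_sq_mul_norm_sq_ne_top {E : Type*}
    [NormedAddCommGroup E] {g : ℝ → E} (hg : Continuous g)
    (h : ∫⁻ ξ, ENNReal.ofReal (ξ ^ 2 * ‖g ξ‖ ^ 2) ≠ ⊤) : Integrable g := by
  have hbound : ∀ ξ ∉ Icc (-1 : ℝ) 1, ‖g ξ‖ ≤ 2 * (1 + ξ ^ 2)⁻¹ + ξ ^ 2 * ‖g ξ‖ ^ 2 := by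
    intro ξ hξ
    have hξ : 1 ≤ ξ ^ 2 := by
      simp only [mem_Icc, not_and_or, not_le] at hξ
      rcases hξ with hξ | hξ <;> nlinarith
    have := norm_nonneg (g ξ)
    rw [← div_eq_mul_inv, div_add' _ _ _ (by positivity), le_div_iff₀ (by positivity)]
    nlinarith [sq_nonneg (ξ ^ 2 * ‖g ξ‖ - 1), sq_nonneg (‖g ξ‖ - 1),
      mul_nonneg (sub_nonneg.2 hξ) (sq_nonneg ‖g ξ‖)]
  have hweight : Integrable fun ξ ↦ ξ ^ 2 * ‖g ξ‖ ^ 2 :=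
    ⟨by fun_prop, (hasFiniteIntegral_iff_ofReal (ae_of_all _ fun ξ ↦ by positivity)).2 h.lt_top⟩
  rw [← integrableOn_univ, ← union_compl_self (Icc (-1) 1)]
  refine hg.integrableOn_Icc.union <|
    ((integrable_inv_one_add_sq.const_mul 2).add hweight).integrableOn.mono'
      hg.aestronglyMeasurable.restrict ?_
  exact ae_restrict_of_forall_mem measurableSet_Icc.compl hbound

theorem Continuous.eqOn_zero_closure_compl {X E : Type*} [TopologicalSpace X] [MeasurableSpace X]
    [OpensMeasurableSpace X] {μ : Measure X} [μ.IsOpenPosMeasure] [TopologicalSpace E] [T2Space E]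
    [Zero E] {f g : X → E} {s : Set X} (hg : Continuous g) (hfg : f =ᵐ[μ] g) (hs : IsClosed s)
    (hf : Function.support f ⊆ s) : EqOn g 0 (closure sᶜ) := by
  refine EqOn.closure (Measure.eqOn_open_of_ae_eq (μ := μ) ?_ hs.isOpen_compl hg.continuousOn
    continuousOn_const) hg continuous_const
  filter_upwards [ae_restrict_of_ae hfg, ae_restrict_mem hs.isOpen_compl.measurableSet]
    with x hx hxs
  rw [← hx]
  exact Function.notMem_support.1 fun h ↦ hxs (hf h)

theorem stmt_7 (f : ℝ → ℂ) (hf : MemLp f 2 (volume : Measure ℝ))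
    (hsupp : Function.support f ⊆ Set.Icc (-1) 1)
    (hdisc : ¬ ∃ g : ℝ → ℂ, Continuous g ∧ f =ᵐ[volume] g ∧ g (-1) = 0 ∧ g 1 = 0) :
    ∫⁻ y : ℝ, ENNReal.ofReal (y ^ 2 * ‖FT f y‖ ^ 2) = ⊤ := by
  by_contra hvar
  have hf₁ : Integrable f := memLp_one_iff_integrable.1 <|
    hf.mono_exponent_of_measure_support_ne_top
      (fun x hx ↦ Function.notMem_support.1 (hx ∘ (hsupp ·))) (by simp) (by norm_num)
  have h𝓕f : Integrable (𝓕 f) := by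
    refine hf₁.continuous_fourier.integrable_of_lintegral_sq_mul_norm_sq_ne_top ?_
    rw [lintegral_sq_mul_norm_FT_sq] at hvar
    exact fun h ↦ hvar (by rw [h, ENNReal.mul_top (by positivity)])
  have hg : Continuous (𝓕⁻ (𝓕 f)) := h𝓕f.continuous_fourierInv
  have hfg : f =ᵐ[volume] 𝓕⁻ (𝓕 f) := hf₁.ae_eq_fourierInv_fourier h𝓕f
  have hzero := hg.eqOn_zero_closure_compl hfg isClosed_Icc hsupp
  rw [closure_compl, interior_Icc] at hzero
  exact hdisc ⟨_, hg, hfg, hzero (by simp), hzero (by simp)⟩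
end

section
/- For any unit vector f ∈ L²(ℝ) (a wave function), the product of the variances of position and momentum satisfies ⟨ΔP²⟩⟨ΔQ²⟩ ≥ 1/4, where ΔQ² = ⟨f|Q²|f⟩ − ⟨f|Q|f⟩² and ΔP² = ⟨f|P²|f⟩ − ⟨f|P|f⟩², with Q multiplication by x and P = -i d/dx. -/
/-!
Let `A = ∫ x |f|²` and `B = ∫ Im (f̄ f')` be the means of `Q` and `P`, and put `g = (x - A) f`,
`h = f' - i B f`, so that `‖g‖₂² = ΔQ²` and `‖h‖₂² = ΔP²`. Regard `ℂ` as a real inner product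
space, `⟪z, w⟫ = Re (z̄ w)`. Since `⟪f, i f⟫ = 0`, the pointwise inner product `⟪g, h⟫` is
`(x - A) Re (f̄ f') = (x - A) (|f|²)' / 2`, whose integral is `-1/2` after an integration by parts
(this is the commutation relation `[Q, P] = i`). Cauchy–Schwarz in `L²` then gives
`1/4 ≤ ‖g‖₂² ‖h‖₂²`.
-/

open MeasureTheory Real Set

open scoped RealInnerProductSpace ComplexConjugate

namespace MeasureTheory.MemLp

variable {α E : Type*} [MeasurableSpace α] {μ : Measure α}
  [NormedAddCommGroup E] [InnerProductSpace ℝ E] {g h : α → E}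

theorem integral_inner_eq (hg : MemLp g 2 μ) (hh : MemLp h 2 μ) :
    ∫ x, ⟪g x, h x⟫ ∂μ = ⟪hg.toLp g, hh.toLp h⟫ := by
  rw [L2.inner_def]
  refine integral_congr_ae ?_
  filter_upwards [hg.coeFn_toLp, hh.coeFn_toLp] with x hgx hhx
  rw [hgx, hhx]

theorem integral_norm_sq_eq (hg : MemLp g 2 μ) :
    ∫ x, ‖g x‖ ^ 2 ∂μ = ‖hg.toLp g‖ ^ 2 := by
  simp_rw [← real_inner_self_eq_norm_sq]
  exact hg.integral_inner_eq hg

theorem integrable_inner (hg : MemLp g 2 μ) (hh : MemLp h 2 μ) :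
    Integrable (fun x => ⟪g x, h x⟫) μ := by
  refine (L2.integrable_inner (hg.toLp g) (hh.toLp h)).congr ?_
  filter_upwards [hg.coeFn_toLp, hh.coeFn_toLp] with x hgx hhx
  rw [hgx, hhx]

theorem integral_inner_sq_le (hg : MemLp g 2 μ) (hh : MemLp h 2 μ) :
    (∫ x, ⟪g x, h x⟫ ∂μ) ^ 2 ≤ (∫ x, ‖g x‖ ^ 2 ∂μ) * ∫ x, ‖h x‖ ^ 2 ∂μ := by
  rw [hg.integral_inner_eq hh, hg.integral_norm_sq_eq, hh.integral_norm_sq_eq, ← mul_pow,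
    ← sq_abs]
  exact pow_le_pow_left₀ (abs_nonneg _) (abs_real_inner_le_norm _ _) 2

theorem integral_norm_sub_smul_sq {u v : α → E} (hu : MemLp u 2 μ) (hv : MemLp v 2 μ)
    (hv_norm : ∫ x, ‖v x‖ ^ 2 ∂μ = 1) :
    ∫ x, ‖u x - (∫ y, ⟪v y, u y⟫ ∂μ) • v x‖ ^ 2 ∂μ
      = (∫ x, ‖u x‖ ^ 2 ∂μ) - (∫ x, ⟪v x, u x⟫ ∂μ) ^ 2 := by
  set m := ∫ y, ⟪v y, u y⟫ ∂μ
  have hV : ‖hv.toLp v‖ ^ 2 = 1 := hv.integral_norm_sq_eq ▸ hv_norm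
  have hm : m = ⟪hv.toLp v, hu.toLp u⟫ := hv.integral_inner_eq hu
  have hw := (hu.sub (hv.const_smul m)).integral_norm_sq_eq
  simp only [Pi.sub_apply, Pi.smul_apply] at hw
  rw [hw, hu.integral_norm_sq_eq, MemLp.toLp_sub hu (hv.const_smul m),
    MemLp.toLp_const_smul m hv, norm_sub_sq_real, real_inner_smul_right, norm_smul, mul_pow,
    real_inner_comm, ← hm, hV, Real.norm_eq_abs, sq_abs]
  ring

end MeasureTheory.MemLp

theorem aestronglyMeasurable_of_hasDerivAt {E : Type*} [NormedAddCommGroup E] [NormedSpace ℝ E]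
    [CompleteSpace E] {f f' : ℝ → E} {μ : Measure ℝ} (hderiv : ∀ x, HasDerivAt f (f' x) x) :
    AEStronglyMeasurable f' μ := by
  rw [show f' = deriv f from funext fun x => (hderiv x).deriv.symm]
  exact (stronglyMeasurable_deriv f).aestronglyMeasurable

theorem integral_sub_mul_inner_deriv {E : Type*} [NormedAddCommGroup E] [InnerProductSpace ℝ E]
    {f f' : ℝ → E} (c : ℝ) (hderiv : ∀ x, HasDerivAt f (f' x) x)
    (hf : Integrable (fun x => ‖f x‖ ^ 2)) (hxf : Integrable (fun x => x * ‖f x‖ ^ 2))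
    (hff' : Integrable (fun x => (x - c) * ⟪f x, f' x⟫)) :
    ∫ x, (x - c) * ⟪f x, f' x⟫ = -(∫ x, ‖f x‖ ^ 2) / 2 := by
  have hF : ∀ x, HasDerivAt (fun y => (y - c) * ‖f y‖ ^ 2)
      (‖f x‖ ^ 2 + 2 * ((x - c) * ⟪f x, f' x⟫)) x := fun x =>
    (((hasDerivAt_id' x).sub_const c).mul (hderiv x).norm_sq).congr_deriv (by ring)
  have hF_int : Integrable (fun x => (x - c) * ‖f x‖ ^ 2) := by
    refine (hxf.sub (hf.const_mul c)).congr (ae_of_all _ fun x => ?_)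
    simp only [Pi.sub_apply]
    ring
  have h := integral_eq_zero_of_hasDerivAt_of_integrable hF (hf.add (hff'.const_mul 2)) hF_int
  rw [integral_add hf (hff'.const_mul 2), integral_const_mul] at h
  linarith

namespace Complex

theorem real_inner_I_smul_left (z w : ℂ) : ⟪I • z, w⟫ = (conj z * (-I * w)).re := by
  simp only [Complex.inner, smul_eq_mul, map_mul, conj_I, mul_re, mul_im, neg_re, neg_im, I_re,
    I_im, conj_re, conj_im]
  ring

theorem real_inner_smul_sub_smul_I_smul (a b : ℝ) (z w : ℂ) :
    ⟪a • z, w - b • I • z⟫ = a * ⟪z, w⟫ := by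
  rw [real_inner_smul_left, inner_sub_right, real_inner_smul_right,
    show ⟪z, I • z⟫ = 0 from real_inner_I_smul_self ℂ z, mul_zero, sub_zero]

end Complex

theorem stmt_12 (f f' : ℝ → ℂ)
    (hderiv : ∀ x : ℝ, HasDerivAt f (f' x) x)
    (hf2 : Integrable (fun x : ℝ => ‖f x‖ ^ 2))
    (hnorm : (∫ x : ℝ, ‖f x‖ ^ 2) = 1)
    (hq2 : Integrable (fun x : ℝ => x ^ 2 * ‖f x‖ ^ 2))
    (hq1 : Integrable (fun x : ℝ => x * ‖f x‖ ^ 2))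
    (hp2 : Integrable (fun x : ℝ => ‖f' x‖ ^ 2))
    (hp1 : Integrable (fun x : ℝ => (starRingEnd ℂ) (f x) * f' x)) :
    ((∫ x : ℝ, ‖f' x‖ ^ 2)
        - ((∫ x : ℝ, (starRingEnd ℂ) (f x) * (-Complex.I * f' x)).re) ^ 2) *
      ((∫ x : ℝ, x ^ 2 * ‖f x‖ ^ 2) - (∫ x : ℝ, x * ‖f x‖ ^ 2) ^ 2) ≥ 1 / 4 := by
  have hf_cont : Continuous f := continuous_iff_continuousAt.2 fun x => (hderiv x).continuousAt
  have hf : MemLp f 2 := (memLp_two_iff_integrable_sq_norm hf_cont.aestronglyMeasurable).2 hf2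
  have hf' : MemLp f' 2 :=
    (memLp_two_iff_integrable_sq_norm (aestronglyMeasurable_of_hasDerivAt hderiv)).2 hp2
  have hIf : MemLp (fun x => Complex.I • f x) 2 := hf.const_smul Complex.I
  have hxf : MemLp (fun x : ℝ => x • f x) 2 :=
    (memLp_two_iff_integrable_sq_norm (by fun_prop)).2 (by simpa [mul_pow] using hq2)
  have hmean_Q : ∫ x, x * ‖f x‖ ^ 2 = ∫ x, ⟪f x, x • f x⟫ := by
    simp_rw [real_inner_smul_right, real_inner_self_eq_norm_sq]
  have hmean_P : (∫ x, conj (f x) * (-Complex.I * f' x)).re = ∫ x, ⟪Complex.I • f x, f' x⟫ := by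
    simp_rw [Complex.real_inner_I_smul_left]
    exact (integral_re ((hp1.const_mul (-Complex.I)).congr (ae_of_all _ fun x => by ring))).symm
  set A := ∫ x, ⟪f x, x • f x⟫
  set B := ∫ x, ⟪Complex.I • f x, f' x⟫
  have hinner : ∀ x : ℝ,
      ⟪x • f x - A • f x, f' x - B • Complex.I • f x⟫ = (x - A) * ⟪f x, f' x⟫ :=
    fun x => by rw [← sub_smul, Complex.real_inner_smul_sub_smul_I_smul]
  have hg : MemLp (fun x : ℝ => x • f x - A • f x) 2 := hxf.sub (hf.const_smul A)
  have hh : MemLp (fun x => f' x - B • Complex.I • f x) 2 := hf'.sub (hIf.const_smul B)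
  have hcommutator : ∫ x, ⟪x • f x - A • f x, f' x - B • Complex.I • f x⟫ = -1 / 2 := by
    simp_rw [hinner]
    rw [integral_sub_mul_inner_deriv A hderiv hf2 hq1, hnorm]
    simpa only [hinner] using hg.integrable_inner hh
  have hsq : ∫ x, x ^ 2 * ‖f x‖ ^ 2 = ∫ x, ‖x • f x‖ ^ 2 := by simp [mul_pow]
  have hCS := hg.integral_inner_sq_le hh
  rw [hcommutator, hxf.integral_norm_sub_smul_sq hf hnorm,
    hf'.integral_norm_sub_smul_sq hIf (by simpa [norm_smul] using hnorm), ← hsq] at hCS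
  rw [ge_iff_le, hmean_P, hmean_Q, mul_comm]
  linarith
end

section
/- The operator Π_1 F† Π_R F Π_1 on L²([-1,1]) is an integral operator with kernel K(x,x') = sin(R(x−x'))/(π(x−x')), and it commutes with the prolate spheroidal differential operator L = d/dx[(1−x²) d/dx] − R²x²; consequently its eigenfunctions are the prolate spheroidal wave functions. -/
/-! Off the diagonal, Fubini turns the kernel of `Π₁ F† Π_R F Π₁` into
`(2π)⁻¹ ∫_{-R}^{R} e^{i(x'-x)y} dy = sin (R (x - x')) / (π (x - x'))`, which agrees a.e. with
`k (x - x')` for the smooth function `k u = (R / π) sinc (R u)`. Differentiating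
`u k u = sin (R u) / π` twice gives `u k'' + 2 k' + R² u k = 0`.

Because `1 - x²` vanishes at `±1`, two integrations by parts without boundary terms show that `L`
is symmetric on `[-1, 1]`, so `K L f = ∫ L_{x'} k (x - x') f x' dx'`, while differentiation under
the integral gives `L K f = ∫ L_x k (x - x') f x' dx'`. The two integrands differ by `-(x + x')`
times the differential equation of `k` at `u = x - x'`, hence vanish. -/

open MeasureTheory Real Set Filter

/-- The integral operator on L^2([-1,1]) with the sinc kernel K(x,x') = sin(R(x-x'))/(pi(x-x')). -/
noncomputable def Kop (R : ℝ) (g : ℝ → ℂ) (x : ℝ) : ℂ :=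
  ∫ x' in Set.Icc (-1 : ℝ) 1,
    ((Real.sin (R * (x - x')) / (Real.pi * (x - x')) : ℝ) : ℂ) * g x'

/-- The prolate spheroidal differential operator L = d/dx[(1-x^2) d/dx] - R^2 x^2. -/
noncomputable def Lop (R : ℝ) (g : ℝ → ℂ) (x : ℝ) : ℂ :=
  deriv (fun t : ℝ => (((1 - t ^ 2 : ℝ)) : ℂ) * deriv g t) x
    - ((R ^ 2 * x ^ 2 : ℝ) : ℂ) * g x

theorem Real.analyticAt_sinc (x : ℝ) : AnalyticAt ℝ sinc x := by
  rw [sinc_eq_dslope]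
  rcases eq_or_ne x 0 with rfl | hx
  · obtain ⟨p, hp⟩ := analyticAt_sin (x := (0 : ℝ))
    exact hp.has_fpower_series_dslope_fslope.analyticAt
  · refine ((analyticAt_sin.div analyticAt_id hx)).congr ?_
    filter_upwards [isOpen_ne.mem_nhds hx] with t ht
    simp [dslope_of_ne _ ht, slope_def_field]

theorem Real.contDiff_sinc {n : WithTop ℕ∞} : ContDiff ℝ n sinc :=
  AnalyticOnNhd.contDiff fun x _ => analyticAt_sinc x

theorem integral_exp_mul_mul_I_eq_sinc (a R : ℝ) :
    ∫ y in -R..R, Complex.exp ((a * y : ℝ) * Complex.I) = 2 * R * sinc (a * R) := by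
  rcases eq_or_ne a 0 with rfl | ha
  · simp [two_mul]
  rw [intervalIntegral.integral_comp_mul_left (fun t : ℝ => Complex.exp (t * Complex.I)) ha,
    mul_neg, integral_exp_mul_I_eq_sinc]
  have ha' : (a : ℂ) ≠ 0 := Complex.ofReal_ne_zero.2 ha
  simp only [Complex.real_smul, Complex.ofReal_inv, Complex.ofReal_mul]
  field_simp

theorem ode_of_mul_eq_sin {h : ℝ → ℝ} (hd : Differentiable ℝ h)
    (hd' : Differentiable ℝ (deriv h)) {c R : ℝ}
    (hmul : ∀ u, u * h u = c * sin (R * u)) (u : ℝ) :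
    u * deriv (deriv h) u + 2 * deriv h u + R ^ 2 * (u * h u) = 0 := by
  have hderiv_once : ∀ v, h v + v * deriv h v = c * (R * cos (R * v)) := by
    intro v
    have h1 : HasDerivAt (fun v => v * h v) (1 * h v + v * deriv h v) v :=
      (hasDerivAt_id' v).mul (hd v).hasDerivAt
    have h2 := (((hasDerivAt_id' v).const_mul R).sin).const_mul c
    rw [funext hmul] at h1
    simpa [mul_comm] using h1.unique h2
  have h1 : HasDerivAt (fun v => h v + v * deriv h v)
      (deriv h u + (1 * deriv h u + u * deriv (deriv h) u)) u :=
    (hd u).hasDerivAt.add ((hasDerivAt_id' u).mul (hd' u).hasDerivAt)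
  have h2 := ((((hasDerivAt_id' u).const_mul R).cos).const_mul R).const_mul c
  rw [funext hderiv_once] at h1
  linear_combination h1.unique h2 + R ^ 2 * hmul u

theorem hasDerivAt_ofReal_comp_sub_const {k k' : ℝ → ℝ} (hk : ∀ u, HasDerivAt k (k' u) u)
    (c t : ℝ) : HasDerivAt (fun t => (k (t - c) : ℂ)) (k' (t - c)) t := by
  simpa using ((hk (t - c)).comp t ((hasDerivAt_id t).sub_const c)).ofReal_comp

theorem hasDerivAt_ofReal_comp_const_sub {k k' : ℝ → ℝ} (hk : ∀ u, HasDerivAt k (k' u) u)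
    (c t : ℝ) : HasDerivAt (fun t => (k (c - t) : ℂ)) (-k' (c - t)) t := by
  simpa using ((hk (c - t)).comp t ((hasDerivAt_id t).const_sub c)).ofReal_comp

theorem hasDerivAt_intervalIntegral_comp_sub_mul {k k' : ℝ → ℝ}
    (hk : ∀ u, HasDerivAt k (k' u) u) (hk' : Continuous k') {g : ℝ → ℂ} {a b : ℝ}
    (hg : IntervalIntegrable g volume a b) (t₀ : ℝ) :
    HasDerivAt (fun t => ∫ x in a..b, (k (t - x) : ℂ) * g x)
      (∫ x in a..b, (k' (t₀ - x) : ℂ) * g x) t₀ := by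
  have hkc : Continuous k := continuous_iff_continuousAt.2 fun u => (hk u).continuousAt
  have cont : ∀ {h : ℝ → ℝ}, Continuous h → ∀ t,
      Continuous fun x => (h (t - x) : ℂ) :=
    fun hh t => by fun_prop
  obtain ⟨C, hC⟩ := (((isCompact_closedBall t₀ 1).prod isCompact_uIcc).image
    continuous_sub).exists_bound_of_continuousOn hk'.continuousOn
  refine (intervalIntegral.hasDerivAt_integral_of_dominated_loc_of_deriv_le
    (F := fun t x => (k (t - x) : ℂ) * g x) (F' := fun t x => (k' (t - x) : ℂ) * g x)
    (bound := fun x => C * ‖g x‖) (Metric.closedBall_mem_nhds t₀ one_pos)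
    (Eventually.of_forall fun t => ((cont hkc t).aestronglyMeasurable.mul
      hg.def'.aestronglyMeasurable))
    (hg.continuousOn_mul (cont hkc t₀).continuousOn)
    ((cont hk' t₀).aestronglyMeasurable.mul hg.def'.aestronglyMeasurable)
    ?_ (hg.norm.const_mul C) ?_).2
  · refine Eventually.of_forall fun x hx t ht => ?_
    rw [norm_mul, Complex.norm_real]
    exact mul_le_mul_of_nonneg_right (hC _ ⟨(t, x), ⟨ht, uIoc_subset_uIcc hx⟩, rfl⟩)
      (norm_nonneg _)
  · exact Eventually.of_forall fun x _ t _ =>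
      (hasDerivAt_ofReal_comp_sub_const hk x t).mul_const (g x)

theorem intervalIntegral.integral_mul_deriv_eq_neg_of_eq_zero {a b : ℝ} {u w : ℝ → ℂ}
    (hu : ContDiff ℝ 1 u) (hw : ContDiff ℝ 1 w) (ha : w a = 0) (hb : w b = 0) :
    ∫ x in a..b, u x * deriv w x = -∫ x in a..b, deriv u x * w x := by
  rw [integral_mul_deriv_eq_deriv_mul
    (fun x _ => (hu.differentiable one_ne_zero x).hasDerivAt)
    (fun x _ => (hw.differentiable one_ne_zero x).hasDerivAt)
    ((hu.continuous_deriv le_rfl).intervalIntegrable _ _)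
    ((hw.continuous_deriv le_rfl).intervalIntegrable _ _), ha, hb]
  simp

theorem intervalIntegral.integral_mul_deriv_mul_deriv_symm {a b : ℝ} {p u v : ℝ → ℂ}
    (hp : ContDiff ℝ 1 p) (hu : ContDiff ℝ 2 u) (hv : ContDiff ℝ 2 v)
    (ha : p a = 0) (hb : p b = 0) :
    ∫ x in a..b, u x * deriv (fun t => p t * deriv v t) x =
      ∫ x in a..b, deriv (fun t => p t * deriv u t) x * v x := by
  simp_rw [mul_comm _ (v _)]
  rw [integral_mul_deriv_eq_neg_of_eq_zero (hu.of_le (by norm_num)) (hp.mul hv.deriv')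
      (by simp [ha]) (by simp [hb]),
    integral_mul_deriv_eq_neg_of_eq_zero (hv.of_le (by norm_num)) (hp.mul hu.deriv')
      (by simp [ha]) (by simp [hb])]
  congr 2
  ext x
  ring

theorem Lop_eq_of_hasDerivAt (R : ℝ) {g g' : ℝ → ℂ} {g'' : ℂ} {x : ℝ}
    (hg : ∀ t, HasDerivAt g (g' t) t) (hg' : HasDerivAt g' g'' x) :
    Lop R g x = -(2 * x) * g' x + (1 - x ^ 2) * g'' - R ^ 2 * x ^ 2 * g x := by
  have hp : HasDerivAt (fun t : ℝ => ((1 - t ^ 2 : ℝ) : ℂ)) ((-(2 * x) : ℝ) : ℂ) x := by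
    simpa using ((hasDerivAt_pow 2 x).const_sub 1).ofReal_comp
  have hpg' : HasDerivAt (fun t : ℝ => ((1 - t ^ 2 : ℝ) : ℂ) * g' t)
      ((-(2 * x) : ℝ) * g' x + ((1 - x ^ 2 : ℝ) : ℂ) * g'') x := hp.mul hg'
  rw [Lop, show deriv g = g' from funext fun t => (hg t).deriv, hpg'.deriv]
  push_cast
  ring

theorem integral_mul_Lop_symm (R : ℝ) {u v : ℝ → ℂ} (hu : ContDiff ℝ 2 u)
    (hv : ContDiff ℝ 2 v) :
    ∫ x in (-1)..1, u x * Lop R v x = ∫ x in (-1)..1, Lop R u x * v x := by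
  have hp : ContDiff ℝ 1 fun t : ℝ => ((1 - t ^ 2 : ℝ) : ℂ) :=
    Complex.ofRealCLM.contDiff.comp (contDiff_const.sub (contDiff_id.pow 2))
  have hdu := (hp.mul hu.deriv').continuous_deriv le_rfl
  have hdv := (hp.mul hv.deriv').continuous_deriv le_rfl
  have huc := hu.continuous
  have hvc := hv.continuous
  simp only [Lop, mul_sub, sub_mul]
  have hint : ∀ {w : ℝ → ℂ}, Continuous w → IntervalIntegrable w volume (-1) 1 :=
    fun hw => hw.intervalIntegrable _ _
  rw [intervalIntegral.integral_sub (hint (by fun_prop)) (hint (by fun_prop)),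
    intervalIntegral.integral_sub (hint (by fun_prop)) (hint (by fun_prop)),
    intervalIntegral.integral_mul_deriv_mul_deriv_symm hp hu hv (by norm_num) (by norm_num)]
  congr 1
  exact intervalIntegral.integral_congr fun x _ => by ring

-- Smooth at `u = 0`, where the integrand of `Kop` takes the junk value `0 / 0 = 0` instead.
noncomputable def sincKernel (R u : ℝ) : ℝ := R / π * sinc (R * u)

section sincKernel

variable (R : ℝ)

theorem mul_sincKernel (u : ℝ) : u * sincKernel R u = π⁻¹ * sin (R * u) := by
  rw [sincKernel]
  rcases eq_or_ne (R * u) 0 with h | h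
  · rcases mul_eq_zero.1 h with rfl | rfl <;> simp
  · obtain ⟨hR, hu⟩ := mul_ne_zero_iff.1 h
    rw [sinc_of_ne_zero h]
    field_simp

theorem sincKernel_of_ne_zero {u : ℝ} (hu : u ≠ 0) :
    sincKernel R u = sin (R * u) / (π * u) := by
  rw [eq_div_iff (mul_ne_zero pi_ne_zero hu), mul_comm π, ← mul_assoc, mul_comm _ u,
    mul_sincKernel]
  field_simp

theorem contDiff_sincKernel {n : WithTop ℕ∞} : ContDiff ℝ n (sincKernel R) :=
  contDiff_const.mul (contDiff_sinc.comp (contDiff_const.mul contDiff_id))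

theorem hasDerivAt_sincKernel (u : ℝ) :
    HasDerivAt (sincKernel R) (deriv (sincKernel R) u) u :=
  ((contDiff_sincKernel R (n := 1)).differentiable one_ne_zero u).hasDerivAt

theorem hasDerivAt_deriv_sincKernel (u : ℝ) :
    HasDerivAt (deriv (sincKernel R)) (deriv (deriv (sincKernel R)) u) u :=
  ((contDiff_sincKernel R (n := 2)).differentiable_deriv_two u).hasDerivAt

theorem sincKernel_ode (u : ℝ) :
    u * deriv (deriv (sincKernel R)) u + 2 * deriv (sincKernel R) u +
      R ^ 2 * (u * sincKernel R u) = 0 :=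
  ode_of_mul_eq_sin ((contDiff_sincKernel R (n := 1)).differentiable one_ne_zero)
    (contDiff_sincKernel R (n := 2)).differentiable_deriv_two (mul_sincKernel R) u

theorem Kop_eq_setIntegral_sincKernel (g : ℝ → ℂ) (x : ℝ) :
    Kop R g x = ∫ x' in Icc (-1 : ℝ) 1, (sincKernel R (x - x') : ℂ) * g x' := by
  refine integral_congr_ae (ae_restrict_of_ae ?_)
  filter_upwards [volume.ae_ne x] with x' hx'
  rw [sincKernel_of_ne_zero R (sub_ne_zero.2 hx'.symm)]

theorem Kop_eq_intervalIntegral_sincKernel (g : ℝ → ℂ) (x : ℝ) :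
    Kop R g x = ∫ x' in (-1)..1, (sincKernel R (x - x') : ℂ) * g x' := by
  rw [Kop_eq_setIntegral_sincKernel, integral_Icc_eq_integral_Ioc,
    intervalIntegral.integral_of_le (by norm_num)]

theorem Lop_sincKernel_sub_comm (x x' : ℝ) :
    Lop R (fun t => (sincKernel R (t - x') : ℂ)) x =
      Lop R (fun t => (sincKernel R (x - t) : ℂ)) x' := by
  rw [Lop_eq_of_hasDerivAt R (hasDerivAt_ofReal_comp_sub_const (hasDerivAt_sincKernel R) x')
      (hasDerivAt_ofReal_comp_sub_const (hasDerivAt_deriv_sincKernel R) x' x),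
    Lop_eq_of_hasDerivAt R (hasDerivAt_ofReal_comp_const_sub (hasDerivAt_sincKernel R) x)
      (hasDerivAt_ofReal_comp_const_sub (hasDerivAt_deriv_sincKernel R) x x').neg]
  have ode := congrArg (fun r : ℝ => (r : ℂ)) (sincKernel_ode R (x - x'))
  push_cast at ode
  linear_combination (-(x + x' : ℂ)) * ode

theorem Lop_Kop_eq_integral {f : ℝ → ℂ} (hf : IntervalIntegrable f volume (-1) 1) (x : ℝ) :
    Lop R (Kop R f) x =
      ∫ x' in (-1)..1, Lop R (fun t => (sincKernel R (t - x') : ℂ)) x * f x' := by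
  have hk1 : Continuous (deriv (sincKernel R)) :=
    (contDiff_sincKernel R (n := 1)).continuous_deriv le_rfl
  have hk2 : Continuous (deriv (deriv (sincKernel R))) :=
    ((contDiff_sincKernel R (n := 2)).deriv' (n := 1)).continuous_deriv le_rfl
  rw [show Kop R f = _ from funext (Kop_eq_intervalIntegral_sincKernel R f),
    Lop_eq_of_hasDerivAt R
      (fun t => hasDerivAt_intervalIntegral_comp_sub_mul (hasDerivAt_sincKernel R) hk1 hf t)
      (hasDerivAt_intervalIntegral_comp_sub_mul (hasDerivAt_deriv_sincKernel R) hk2 hf x)]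
  have hint : ∀ {h : ℝ → ℝ}, Continuous h →
      IntervalIntegrable (fun x' => (h (x - x') : ℂ) * f x') volume (-1) 1 :=
    fun hh => hf.continuousOn_mul (by fun_prop)
  rw [← intervalIntegral.integral_const_mul, ← intervalIntegral.integral_const_mul,
    ← intervalIntegral.integral_const_mul,
    ← intervalIntegral.integral_add ((hint hk1).const_mul _) ((hint hk2).const_mul _),
    ← intervalIntegral.integral_sub (((hint hk1).const_mul _).add ((hint hk2).const_mul _))
      ((hint (contDiff_sincKernel R (n := 0)).continuous).const_mul _)]
  refine intervalIntegral.integral_congr fun x' _ => ?_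
  rw [Lop_eq_of_hasDerivAt R (hasDerivAt_ofReal_comp_sub_const (hasDerivAt_sincKernel R) x')
    (hasDerivAt_ofReal_comp_sub_const (hasDerivAt_deriv_sincKernel R) x' x)]
  ring

theorem Kop_Lop_comm {f : ℝ → ℂ} (hf : ContDiff ℝ 2 f) (x : ℝ) :
    Kop R (Lop R f) x = Lop R (Kop R f) x := by
  have hk : ContDiff ℝ 2 fun t => (sincKernel R (x - t) : ℂ) :=
    Complex.ofRealCLM.contDiff.comp
      ((contDiff_sincKernel R).comp (contDiff_const.sub contDiff_id))
  calc Kop R (Lop R f) x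
      = ∫ x' in (-1)..1, (sincKernel R (x - x') : ℂ) * Lop R f x' :=
        Kop_eq_intervalIntegral_sincKernel R _ x
    _ = ∫ x' in (-1)..1, Lop R (fun t => (sincKernel R (x - t) : ℂ)) x' * f x' :=
        integral_mul_Lop_symm R hk hf
    _ = ∫ x' in (-1)..1, Lop R (fun t => (sincKernel R (t - x') : ℂ)) x * f x' := by
        simp only [Lop_sincKernel_sub_comm]
    _ = Lop R (Kop R f) x := (Lop_Kop_eq_integral R (hf.continuous.intervalIntegrable _ _) x).symm

end sincKernel

theorem integral_FT_mul_exp_eq_integral_sincKernel {f : ℝ → ℂ} (hf : Integrable f) {R : ℝ}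
    (hR : 0 ≤ R) (x : ℝ) :
    ((1 / √(2 * π) : ℝ) : ℂ) *
        (∫ y in Icc (-R) R, FT f y * Complex.exp (-Complex.I * y * x)) =
      ∫ x', (sincKernel R (x - x') : ℂ) * f x' := by
  set c : ℂ := ((1 / √(2 * π) : ℝ) : ℂ)
  set F : ℝ → ℝ → ℂ := fun y x' => f x' * Complex.exp (((x' - x) * y : ℝ) * Complex.I)
  have hFT : ∀ y : ℝ, FT f y * Complex.exp (-Complex.I * y * x) = c * ∫ x', F y x' := by
    intro y
    rw [FT, mul_assoc, ← integral_mul_const]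
    congr 2 with x'
    rw [mul_assoc, ← Complex.exp_add]
    simp only [F]
    push_cast
    ring_nf
  have hF : Integrable (Function.uncurry F) ((volume.restrict (Icc (-R) R)).prod volume) := by
    refine ((integrable_const (1 : ℝ)).mul_prod hf.norm).mono' ?_
      (Eventually.of_forall fun z => ?_)
    · exact (hf.aestronglyMeasurable.comp_quasiMeasurePreserving
        Measure.quasiMeasurePreserving_snd).mul (by fun_prop : Continuous _).aestronglyMeasurable
    · simp [F, Function.uncurry, Complex.norm_exp]
  have hinner : ∀ x', ∫ y in Icc (-R) R, F y x' = f x' * (2 * R * sinc ((x' - x) * R)) := by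
    intro x'
    rw [integral_const_mul, integral_Icc_eq_integral_Ioc,
      ← intervalIntegral.integral_of_le (neg_le_self hR), integral_exp_mul_mul_I_eq_sinc]
  have hc : c * c = ((2 * π)⁻¹ : ℝ) := by
    rw [← Complex.ofReal_mul, div_mul_div_comm, one_mul, mul_self_sqrt (by positivity), one_div]
  simp_rw [hFT]
  rw [integral_const_mul, ← mul_assoc, integral_integral_swap hF, ← integral_const_mul]
  congr 1 with x'
  rw [hinner, hc, sincKernel, show (x' - x) * R = -(R * (x - x')) by ring, sinc_neg]
  push_cast
  field_simp

theorem stmt_15 (R : ℝ) (hR : 0 < R) :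
    -- Π₁ F† Π_R F Π₁ is the integral operator with kernel sin(R(x-x'))/(π(x-x'))
    (∀ f : ℝ → ℂ, Continuous f → Function.support f ⊆ Set.Icc (-1) 1 →
      ∀ x : ℝ,
        ((1 / Real.sqrt (2 * Real.pi) : ℝ) : ℂ) *
            (∫ y in Set.Icc (-R) R, FT f y * Complex.exp (-Complex.I * y * x))
          = Kop R f x) ∧
    -- it commutes with the prolate spheroidal differential operator
    (∀ f : ℝ → ℂ, ContDiff ℝ (⊤ : ℕ∞) f → ∀ x ∈ Set.Icc (-1 : ℝ) 1,
      Kop R (Lop R f) x = Lop R (Kop R f) x) := by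
  refine ⟨fun f hfc hsupp x => ?_,
    fun f hf x _ => Kop_Lop_comm R (hf.of_le (WithTop.coe_le_coe.2 le_top)) x⟩
  have hzero : ∀ x' ∉ Icc (-1 : ℝ) 1, f x' = 0 := fun x' hx' =>
    Function.notMem_support.1 fun h => hx' (hsupp h)
  have hfi : Integrable f :=
    hfc.integrable_of_hasCompactSupport (HasCompactSupport.intro isCompact_Icc hzero)
  rw [integral_FT_mul_exp_eq_integral_sincKernel hfi hR.le, Kop_eq_setIntegral_sincKernel]
  refine (setIntegral_eq_integral_of_forall_compl_eq_zero fun x' hx' => ?_).symm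
  rw [hzero x' hx', mul_zero]
end

section
/- For any unit f ∈ L²(ℝ) with support in [-1,1] and any R > 0, the tail probability ∫_{|y|>R} |F(f)(y)|² dy is strictly positive (no nonzero compactly supported function is band-limited). -/
/-!
If `FT f` vanished at all large `y`, so would the entire function `z ↦ ∫ f x e^{ixz}` (entire
because `f` has compact support), which would then vanish identically by the identity theorem,
contradicting `∫ ‖f‖² = 1`. So `FT f` is nonzero somewhere in the tail, hence on an open subset
of it by continuity. The tail integral is not a junk value because `‖FT f‖²` is integrable:
for every `t`, `∑ₙ ‖FT f (t + n)‖² = ∫ ‖f‖²` is Parseval's identity on a circle of length `2π`,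
which contains the support of `f`, and integrating over `t ∈ [0, 1)` gives a finite integral.
-/

open MeasureTheory Real Set Filter

open scoped ENNReal Topology

theorem MeasureTheory.MemLp.integrable_of_support_subset {α E : Type*} [MeasurableSpace α]
    [NormedAddCommGroup E] {μ : Measure α} {f : α → E} {p : ℝ≥0∞} {s : Set α}
    (hf : MemLp f p μ) (hp : 1 ≤ p) (hs : μ s ≠ ∞) (hsupp : Function.support f ⊆ s) :
    Integrable f μ :=
  memLp_one_iff_integrable.mp <| hf.mono_exponent_of_measure_support_ne_top
    (fun _ hx => Function.notMem_support.mp (mt (@hsupp _) hx)) hs hp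

noncomputable def fourierLaplace (f : ℝ → ℂ) (z : ℂ) : ℂ :=
  ∫ x : ℝ, f x * Complex.exp (Complex.I * x * z)

theorem FT_eq_fourierLaplace (f : ℝ → ℂ) (y : ℝ) :
    FT f y = ((1 / √(2 * π) : ℝ) : ℂ) * fourierLaplace f y := rfl

theorem norm_exp_I_mul_ofReal_mul_ofReal (x y : ℝ) : ‖Complex.exp (Complex.I * x * y)‖ = 1 := by
  simp [Complex.norm_exp, Complex.mul_re]

theorem norm_exp_I_mul_le {x a r : ℝ} (hx : x ∈ Icc (-a) a) {z : ℂ} (hz : ‖z‖ ≤ r) :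
    ‖Complex.exp (Complex.I * x * z)‖ ≤ Real.exp (a * r) := by
  have hxa : |x| ≤ a := abs_le.mpr hx
  rw [Complex.norm_exp, Real.exp_le_exp]
  calc (Complex.I * x * z).re = -(x * z.im) := by simp [Complex.mul_re]
    _ ≤ |x| * |z.im| := by rw [← abs_mul]; exact neg_le_abs _
    _ ≤ a * r := mul_le_mul hxa ((Complex.abs_im_le_norm z).trans hz) (abs_nonneg _)
        ((abs_nonneg x).trans hxa)

theorem Differentiable.eq_zero_of_eventually_atTop_ofReal {g : ℂ → ℂ} (hg : Differentiable ℂ g)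
    (h : ∀ᶠ y : ℝ in atTop, g y = 0) : g = 0 := by
  obtain ⟨R, hR⟩ := eventually_atTop.mp h
  have htendsto : Tendsto ((↑) : ℝ → ℂ) (𝓝[>] R) (𝓝[≠] (R : ℂ)) :=
    tendsto_nhdsWithin_of_tendsto_nhds_of_eventually_within _
      Complex.continuous_ofReal.continuousWithinAt
      (eventually_nhdsWithin_of_forall fun y hy => by simpa using (mem_Ioi.mp hy).ne')
  have hright : ∀ᶠ y : ℝ in 𝓝[>] R, g y = 0 :=
    eventually_nhdsWithin_of_forall fun y hy => hR y (mem_Ioi.mp hy).le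
  have hfreq : ∃ᶠ z in 𝓝[≠] (R : ℂ), g z = 0 := htendsto.frequently hright.frequently
  have hanalytic : AnalyticOnNhd ℂ g univ := hg.differentiableOn.analyticOnNhd isOpen_univ
  funext z
  exact hanalytic.eqOn_zero_of_preconnected_of_frequently_eq_zero isPreconnected_univ
    (mem_univ _) hfreq (mem_univ z)

section EntireExtension

variable {f : ℝ → ℂ} {a : ℝ}

theorem norm_mul_exp_I_mul_le (hsupp : Function.support f ⊆ Icc (-a) a) (x : ℝ) {z : ℂ} {r : ℝ}
    (hz : ‖z‖ ≤ r) : ‖f x * Complex.exp (Complex.I * x * z)‖ ≤ ‖f x‖ * Real.exp (a * r) := by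
  by_cases hx : f x = 0
  · simp [hx]
  rw [norm_mul]
  exact mul_le_mul_of_nonneg_left (norm_exp_I_mul_le (hsupp hx) hz) (norm_nonneg _)

theorem norm_I_mul_mul_exp_I_mul_le (hsupp : Function.support f ⊆ Icc (-a) a) (x : ℝ) {z : ℂ}
    {r : ℝ} (hz : ‖z‖ ≤ r) :
    ‖Complex.I * x * (f x * Complex.exp (Complex.I * x * z))‖ ≤
      a * (‖f x‖ * Real.exp (a * r)) := by
  by_cases hx : f x = 0
  · simp [hx]
  have hxa : |x| ≤ a := abs_le.mpr (hsupp hx)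
  rw [norm_mul, norm_mul, Complex.norm_I, one_mul, Complex.norm_real, norm_eq_abs]
  exact mul_le_mul hxa (norm_mul_exp_I_mul_le hsupp x hz) (norm_nonneg _)
    ((abs_nonneg x).trans hxa)

theorem differentiable_fourierLaplace (hf : Integrable f)
    (hsupp : Function.support f ⊆ Icc (-a) a) : Differentiable ℂ (fourierLaplace f) := by
  intro z₀
  have hmeas (z : ℂ) :
      AEStronglyMeasurable (fun x : ℝ => f x * Complex.exp (Complex.I * x * z)) :=
    hf.aestronglyMeasurable.mul (by fun_prop : Continuous _).aestronglyMeasurable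
  refine (hasDerivAt_integral_of_dominated_loc_of_deriv_le (Metric.ball_mem_nhds z₀ one_pos)
    (F' := fun z x => Complex.I * x * (f x * Complex.exp (Complex.I * x * z)))
    (bound := fun x => a * (‖f x‖ * Real.exp (a * (‖z₀‖ + 1))))
    (Eventually.of_forall hmeas) ?_ ?_ ?_ ?_ ?_).2.differentiableAt
  · exact (hf.norm.mul_const _).mono' (hmeas z₀)
      (ae_of_all _ fun x => norm_mul_exp_I_mul_le hsupp x le_rfl)
  · exact (by fun_prop : Continuous fun x : ℝ => Complex.I * x).aestronglyMeasurable.mul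
      (hmeas z₀)
  · refine ae_of_all _ fun x z hz => norm_I_mul_mul_exp_I_mul_le hsupp x ?_
    linarith [norm_le_norm_add_norm_sub' z z₀, mem_ball_iff_norm.mp hz]
  · exact (hf.norm.mul_const _).const_mul a
  · refine ae_of_all _ fun x z _ => ?_
    simpa [mul_comm, mul_left_comm] using
      (((hasDerivAt_id z).const_mul (Complex.I * x)).cexp).const_mul (f x)

theorem FT_eq_zero_of_eventually_atTop (hf : Integrable f)
    (hsupp : Function.support f ⊆ Icc (-a) a) (h : ∀ᶠ y in atTop, FT f y = 0) : FT f = 0 := by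
  have hc : ((1 / √(2 * π) : ℝ) : ℂ) ≠ 0 := by exact_mod_cast (by positivity : 1 / √(2 * π) ≠ 0)
  have hzero := (differentiable_fourierLaplace hf hsupp).eq_zero_of_eventually_atTop_ofReal
    (h.mono fun y hy => by rwa [FT_eq_fourierLaplace, mul_eq_zero, or_iff_right hc] at hy)
  funext y
  simp [FT_eq_fourierLaplace, hzero]

end EntireExtension

section SquareIntegrability

variable {f : ℝ → ℂ}

theorem continuous_FT (hf : Integrable f) : Continuous (FT f) := by
  refine continuous_const.mul (continuous_of_dominated (bound := fun x => ‖f x‖)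
    (fun y => hf.aestronglyMeasurable.mul (by fun_prop : Continuous _).aestronglyMeasurable)
    (fun y => ae_of_all _ fun x => ?_) hf.norm (ae_of_all _ fun x => by fun_prop))
  rw [norm_mul, norm_exp_I_mul_ofReal_mul_ofReal, mul_one]

theorem fourierCoeffOn_mul_exp_I_mul (hsupp : Function.support f ⊆ Ioc (-π) π) (t : ℝ) (n : ℤ) :
    fourierCoeffOn (neg_lt_self pi_pos) (fun x => f x * Complex.exp (Complex.I * x * t)) n =
      ((2 * π)⁻¹ : ℂ) * fourierLaplace f (t - n : ℝ) := by
  rw [fourierCoeffOn_eq_integral, intervalIntegral.integral_of_le (neg_le_self pi_pos.le),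
    setIntegral_eq_integral_of_forall_compl_eq_zero fun x hx => by
      simp [Function.notMem_support.mp (mt (@hsupp x) hx)], fourierLaplace]
  have hintegrand (x : ℝ) :
      fourier (-n) (x : AddCircle (π - -π)) • (f x * Complex.exp (Complex.I * x * t)) =
        f x * Complex.exp (Complex.I * x * (t - n : ℝ)) := by
    have hpi : (π : ℂ) ≠ 0 := Complex.ofReal_ne_zero.mpr pi_ne_zero
    rw [fourier_coe_apply, smul_eq_mul, mul_left_comm, ← Complex.exp_add]
    congr 2
    push_cast
    field_simp
    ring
  simp_rw [hintegrand, Complex.real_smul]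
  congr 1
  push_cast
  ring

/-- The numbers `FT f (t - n) / √(2π)` are the Fourier coefficients of `x ↦ f x e^{ixt}` on the
circle `(-π, π]`, so this is Parseval's identity. -/
theorem hasSum_sq_norm_FT_sub_intCast (hf : MemLp f 2 volume)
    (hsupp : Function.support f ⊆ Ioc (-π) π) (t : ℝ) :
    HasSum (fun n : ℤ => ‖FT f (t - n)‖ ^ 2) (∫ x, ‖f x‖ ^ 2) := by
  have hnorm (x : ℝ) : ‖f x * Complex.exp (Complex.I * x * t)‖ = ‖f x‖ := by
    rw [norm_mul, norm_exp_I_mul_ofReal_mul_ofReal, mul_one]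
  have hg : MemLp (fun x => f x * Complex.exp (Complex.I * x * t)) 2
      (volume.restrict (Ioc (-π) π)) :=
    (hf.of_le (hf.1.mul (by fun_prop : Continuous _).aestronglyMeasurable)
      (ae_of_all _ fun x => (hnorm x).le)).restrict _
  have h := (hasSum_sq_fourierCoeffOn (neg_lt_self pi_pos) hg).mul_left (2 * π)
  simp_rw [fourierCoeffOn_mul_exp_I_mul hsupp t] at h
  have hterm (n : ℤ) :
      2 * π * ‖((2 * π)⁻¹ : ℂ) * fourierLaplace f (t - n : ℝ)‖ ^ 2 = ‖FT f (t - n)‖ ^ 2 := by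
    have hsqrt : √(2 * π) ^ 2 = 2 * π := sq_sqrt (by positivity)
    rw [FT_eq_fourierLaplace, norm_mul, norm_mul, mul_pow, mul_pow, Complex.norm_real,
      norm_inv, Complex.norm_mul, Complex.norm_real, Complex.norm_ofNat, norm_div, norm_one,
      norm_of_nonneg pi_pos.le, norm_of_nonneg (sqrt_nonneg _), div_pow, hsqrt]
    field_simp
  have hvalue :
      2 * π * (π - -π)⁻¹ • ∫ x in -π..π, ‖f x * Complex.exp (Complex.I * x * t)‖ ^ 2 =
        ∫ x, ‖f x‖ ^ 2 := by
    rw [intervalIntegral.integral_of_le (neg_le_self pi_pos.le),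
      setIntegral_eq_integral_of_forall_compl_eq_zero fun x hx => by
        simp [Function.notMem_support.mp (mt (@hsupp x) hx)]]
    simp_rw [hnorm, smul_eq_mul]
    field_simp
    ring
  simpa only [hterm, hvalue] using h

theorem lintegral_eq_of_forall_tsum_add_intCast_eq {φ : ℝ → ℝ≥0∞} (hφ : Measurable φ)
    {c : ℝ≥0∞} (h : ∀ s : ℝ, ∑' n : ℤ, φ (s + n) = c) : ∫⁻ y, φ y = c := by
  have htranslate (n : ℤ) :
      ∫⁻ y in Ico (n : ℝ) (n + 1), φ y = ∫⁻ s in Ico (0 : ℝ) 1, φ (s + n) := by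
    rw [← (measurePreserving_add_right volume (n : ℝ)).setLIntegral_comp_preimage
      measurableSet_Ico hφ, preimage_add_const_Ico, sub_self, add_sub_cancel_left]
  calc ∫⁻ y, φ y = ∑' n : ℤ, ∫⁻ y in Ico (n : ℝ) (n + 1), φ y := by
        rw [← setLIntegral_univ, ← iUnion_Ico_intCast,
          lintegral_iUnion (fun _ => measurableSet_Ico) (pairwise_disjoint_Ico_intCast ℝ)]
    _ = ∫⁻ s in Ico (0 : ℝ) 1, ∑' n : ℤ, φ (s + n) := by
        rw [tsum_congr htranslate]
        exact (lintegral_tsum fun n : ℤ =>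
          (hφ.comp (measurable_add_const (n : ℝ))).aemeasurable).symm
    _ = c := by simp [h]

theorem integrable_sq_norm_FT (hf : MemLp f 2 volume)
    (hsupp : Function.support f ⊆ Ioc (-π) π) : Integrable fun y => ‖FT f y‖ ^ 2 := by
  have hcont : Continuous fun y => ‖FT f y‖ ^ 2 :=
    (continuous_FT (hf.integrable_of_support_subset one_le_two (by simp) hsupp)).norm.pow 2
  have hsum (s : ℝ) : HasSum (fun n : ℤ => ‖FT f (s + n)‖ ^ 2) (∫ x, ‖f x‖ ^ 2) := by
    simpa [Function.comp_def, sub_neg_eq_add] using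
      (Equiv.neg ℤ).hasSum_iff.mpr (hasSum_sq_norm_FT_sub_intCast hf hsupp s)
  refine ⟨hcont.aestronglyMeasurable, ?_⟩
  rw [hasFiniteIntegral_iff_ofReal (ae_of_all _ fun y => by positivity),
    lintegral_eq_of_forall_tsum_add_intCast_eq hcont.measurable.ennreal_ofReal fun s =>
      (ENNReal.ofReal_tsum_of_nonneg (fun n => by positivity) (hsum s).summable).symm.trans
        (congrArg ENNReal.ofReal (hsum s).tsum_eq)]
  exact ENNReal.ofReal_lt_top

end SquareIntegrability

theorem stmt_18_general (f : ℝ → ℂ) (hf : MemLp f 2 (volume : Measure ℝ))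
    (hsupp : Function.support f ⊆ Set.Icc (-1) 1)
    (hnorm : (∫ x : ℝ, ‖f x‖ ^ 2) = 1)
    (R : ℝ) :
    0 < ∫ y in {y : ℝ | R < |y|}, ‖FT f y‖ ^ 2 := by
  have hfi : Integrable f := hf.integrable_of_support_subset one_le_two (by simp) hsupp
  have hsupp' : Function.support f ⊆ Ioc (-π) π :=
    hsupp.trans (Icc_subset_Ioc (by linarith [pi_gt_three]) (by linarith [pi_gt_three]))
  obtain ⟨y, hRy, hy⟩ : ∃ y, R < y ∧ FT f y ≠ 0 := by
    by_contra! h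
    have hzero := FT_eq_zero_of_eventually_atTop hfi hsupp ((eventually_gt_atTop R).mono h)
    have hparseval := hasSum_sq_norm_FT_sub_intCast hf hsupp' 0
    simp only [hzero, hnorm, Pi.zero_apply, norm_zero] at hparseval
    exact one_ne_zero (hparseval.unique (by simp))
  have hopen : IsOpen (Function.support (fun y => ‖FT f y‖ ^ 2) ∩ {y : ℝ | R < |y|}) :=
    ((continuous_FT hfi).norm.pow 2).isOpen_support.inter
      (isOpen_lt continuous_const continuous_abs)
  rw [setIntegral_pos_iff_support_of_nonneg_ae (ae_of_all _ fun _ => by positivity)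
    (integrable_sq_norm_FT hf hsupp').integrableOn]
  exact hopen.measure_pos volume ⟨y, by simpa using hy, hRy.trans_le (le_abs_self y)⟩

theorem stmt_18 (f : ℝ → ℂ) (hf : MemLp f 2 (volume : Measure ℝ))
    (hsupp : Function.support f ⊆ Set.Icc (-1) 1)
    (hnorm : (∫ x : ℝ, ‖f x‖ ^ 2) = 1)
    (R : ℝ) (hR : 0 < R) :
    0 < ∫ y in {y : ℝ | R < |y|}, ‖FT f y‖ ^ 2 :=
  stmt_18_general f hf hsupp hnorm R
end
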